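/- Let T₁,...,T_d be commuting contractions on H with T = T₁⋯T_d, and suppose for some index j there exist bounded operators F_{j1}, F_{j2} on 𝒟_T satisfying D_T T_j = F_{j1} D_T + F_{j2}* D_T T and D_T T_{(j)} = F_{j2} D_T + F_{j1}* D_T T, where T_{(j)} = ∏_{i≠j} T_i. Then such a pair (F_{j1}, F_{j2}) is unique: if (F'_{j1}, F'_{j2}) also satisfies both equations, then F_{j1} = F'_{j1} and F_{j2} = F'_{j2}. -/

import Mathlib

open ContinuousLinearMap

/-- The closure of the range of an operator, as a submodule. -/
noncomputable def ranClosure {H : Type*} [NormedAddCommGroup H] [InnerProductSpace ℂ H]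
    (D : H →L[ℂ] H) : Submodule ℂ H :=
  (LinearMap.range (D : H →ₗ[ℂ] H)).topologicalClosure

theorem mem_ranClosure {H : Type*} [NormedAddCommGroup H] [InnerProductSpace ℂ H]
    (D : H →L[ℂ] H) (h : H) : D h ∈ ranClosure D :=
  Submodule.le_topologicalClosure _ ⟨h, rfl⟩

instance {H : Type*} [NormedAddCommGroup H] [InnerProductSpace ℂ H] [CompleteSpace H]
    (D : H →L[ℂ] H) : CompleteSpace (ranClosure D) :=
  (Submodule.isClosed_topologicalClosure _).completeSpace_coe

open Filter Topology

open scoped InnerProductSpace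

/-!
Subtracting the defining equations of two pairs shows that `G = F₁ - F₁'`, `G' = F₂ - F₂'`
satisfy `G D = -G'* D P` and `G' D = -G* D P`, where `P = T₁ ⋯ T_d`. Hence
`⟪G D h, D h'⟫ = ⟪G D P h, D P h'⟫ = ⋯ = ⟪G D Pⁿ h, D Pⁿ h'⟫`. Since `D*D = 1 - P*P`, the sums
`∑ₖ ‖D Pᵏ h‖²` telescope to at most `‖h‖²`, so `D Pⁿ h → 0` and the form vanishes on the dense
set `Ran D × Ran D`; thus `G = 0`, and symmetrically `G' = 0`.
-/

section Defect

variable {𝕜 H : Type*} [RCLike 𝕜] [NormedAddCommGroup H] [InnerProductSpace 𝕜 H]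
  [CompleteSpace H] {D P : H →L[𝕜] H}

theorem norm_sq_apply_eq_of_adjoint_mul_self_eq (hD : adjoint D * D = 1 - adjoint P * P)
    (x : H) : ‖D x‖ ^ 2 = ‖x‖ ^ 2 - ‖P x‖ ^ 2 := by
  rw [apply_norm_sq_eq_inner_adjoint_left, apply_norm_sq_eq_inner_adjoint_left P,
    ← mul_def, hD, sub_apply, inner_sub_left, map_sub, one_apply_eq_self, inner_self_eq_norm_sq,
    mul_def]

theorem sum_range_norm_sq_apply_pow (hD : adjoint D * D = 1 - adjoint P * P) (x : H) (n : ℕ) :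
    ∑ k ∈ Finset.range n, ‖D ((P ^ k) x)‖ ^ 2 = ‖x‖ ^ 2 - ‖(P ^ n) x‖ ^ 2 := by
  induction n with
  | zero => simp
  | succ n ih =>
    rw [Finset.sum_range_succ, ih, norm_sq_apply_eq_of_adjoint_mul_self_eq hD, pow_succ' P,
      mul_apply_eq_comp]
    ring

theorem tendsto_apply_pow_of_adjoint_mul_self_eq (hD : adjoint D * D = 1 - adjoint P * P)
    (x : H) : Tendsto (fun n ↦ D ((P ^ n) x)) atTop (𝓝 0) := by
  have hsum : Summable fun k ↦ ‖D ((P ^ k) x)‖ ^ 2 :=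
    summable_of_sum_range_le (c := ‖x‖ ^ 2) (fun _ ↦ by positivity) fun n ↦ by
      rw [sum_range_norm_sq_apply_pow hD]
      linarith [sq_nonneg ‖(P ^ n) x‖]
  rw [tendsto_zero_iff_norm_tendsto_zero]
  simpa using hsum.tendsto_atTop_zero.sqrt

end Defect

section Uniqueness

variable {𝕜 H K : Type*} [RCLike 𝕜] [NormedAddCommGroup H] [NormedSpace 𝕜 H]
  [NormedAddCommGroup K] [InnerProductSpace 𝕜 K]

theorem eq_zero_of_inner_apply_eq_zero_of_denseRange {α : Type*} {V : α → K}
    (hV : DenseRange V) {G : K →L[𝕜] K} (hG : ∀ a b, ⟪G (V a), V b⟫_𝕜 = 0) : G = 0 := by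
  have hform : ∀ x y, ⟪G x, y⟫_𝕜 = 0 :=
    hV.induction_on₂ (isClosed_eq (by fun_prop) continuous_const) hG
  ext x
  simpa using hform x (G x)

variable [CompleteSpace K] {V : H →L[𝕜] K} {P : H →L[𝕜] H} {G G' : K →L[𝕜] K}

theorem inner_apply_eq_inner_apply_pow (hG : ∀ h, G (V h) = -adjoint G' (V (P h)))
    (hG' : ∀ h, G' (V h) = -adjoint G (V (P h))) (n : ℕ) (h h' : H) :
    ⟪G (V h), V h'⟫_𝕜 = ⟪G (V ((P ^ n) h)), V ((P ^ n) h')⟫_𝕜 := by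
  induction n generalizing h h' with
  | zero => simp
  | succ n ih =>
    have step : ⟪G (V h), V h'⟫_𝕜 = ⟪G (V (P h)), V (P h')⟫_𝕜 := by
      rw [hG, inner_neg_left, adjoint_inner_left, hG', inner_neg_right, adjoint_inner_right,
        neg_neg]
    rw [step, ih, pow_succ, mul_apply_eq_comp, mul_apply_eq_comp]

theorem eq_zero_of_apply_eq_neg_adjoint_apply (hV : DenseRange V)
    (hdecay : ∀ h, Tendsto (fun n ↦ V ((P ^ n) h)) atTop (𝓝 0))
    (hG : ∀ h, G (V h) = -adjoint G' (V (P h))) (hG' : ∀ h, G' (V h) = -adjoint G (V (P h))) :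
    G = 0 := by
  refine eq_zero_of_inner_apply_eq_zero_of_denseRange hV fun h h' ↦ ?_
  have hlim : Tendsto (fun n ↦ ⟪G (V ((P ^ n) h)), V ((P ^ n) h')⟫_𝕜) atTop (𝓝 0) := by
    simpa using ((G.continuous.tendsto 0).comp (hdecay h)).inner (𝕜 := 𝕜) (hdecay h')
  rw [← funext (inner_apply_eq_inner_apply_pow hG hG' · h h')] at hlim
  exact tendsto_nhds_unique tendsto_const_nhds hlim

end Uniqueness

theorem sub_apply_eq_neg_adjoint_sub_apply {𝕜 K : Type*} [RCLike 𝕜] [NormedAddCommGroup K]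
    [InnerProductSpace 𝕜 K] [CompleteSpace K] {A B A' B' : K →L[𝕜] K} {x y : K}
    (h : A x + adjoint B y = A' x + adjoint B' y) :
    (A - A') x = -adjoint (B - B') y := by
  rw [sub_apply, map_sub, sub_apply, neg_sub, sub_eq_sub_iff_add_eq_add, h, add_comm]

theorem denseRange_of_coe_apply_eq {H : Type*} [NormedAddCommGroup H] [InnerProductSpace ℂ H]
    {D : H →L[ℂ] H} {V : H → ranClosure D} (hV : ∀ h, (V h : H) = D h) : DenseRange V := by
  have hrange : Subtype.val '' Set.range V = Set.range D := by
    rw [← Set.range_comp]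
    exact congrArg Set.range (funext hV)
  intro x
  rw [closure_subtype, hrange]
  exact x.2

theorem stmt16_general {H : Type*} [NormedAddCommGroup H] [InnerProductSpace ℂ H] [CompleteSpace H]
    (d : ℕ) (T : Fin d → H →L[ℂ] H)
    (j : Fin d)
    (D : H →L[ℂ] H) (hDpos : D.IsPositive)
    (hD2 : D * D = 1 - adjoint ((List.ofFn T).prod) * (List.ofFn T).prod)
    (Dmap : H →L[ℂ] ranClosure D) (hDmap : ∀ h : H, (Dmap h : H) = D h)
    (F1 F2 F1' F2' : ranClosure D →L[ℂ] ranClosure D)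
    (hF : ∀ h : H,
      Dmap ((T j) h) = F1 (Dmap h) + adjoint F2 (Dmap (((List.ofFn T).prod) h)) ∧
      Dmap ((((List.ofFn T).eraseIdx (j : ℕ)).prod) h) =
        F2 (Dmap h) + adjoint F1 (Dmap (((List.ofFn T).prod) h)))
    (hF' : ∀ h : H,
      Dmap ((T j) h) = F1' (Dmap h) + adjoint F2' (Dmap (((List.ofFn T).prod) h)) ∧
      Dmap ((((List.ofFn T).eraseIdx (j : ℕ)).prod) h) =
        F2' (Dmap h) + adjoint F1' (Dmap (((List.ofFn T).prod) h))) :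
    F1 = F1' ∧ F2 = F2' := by
  have hD : adjoint D * D = 1 - adjoint (List.ofFn T).prod * (List.ofFn T).prod := by
    rwa [hDpos.isSelfAdjoint.adjoint_eq]
  have hdecay (h : H) :
      Tendsto (fun n ↦ Dmap (((List.ofFn T).prod ^ n) h)) atTop (𝓝 0) := by
    rw [tendsto_subtype_rng]
    simpa only [hDmap, ZeroMemClass.coe_zero] using tendsto_apply_pow_of_adjoint_mul_self_eq hD h
  have hdense := denseRange_of_coe_apply_eq hDmap
  have h₁ (h : H) := sub_apply_eq_neg_adjoint_sub_apply ((hF h).1.symm.trans (hF' h).1)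
  have h₂ (h : H) := sub_apply_eq_neg_adjoint_sub_apply ((hF h).2.symm.trans (hF' h).2)
  exact ⟨sub_eq_zero.mp (eq_zero_of_apply_eq_neg_adjoint_apply hdense hdecay h₁ h₂),
    sub_eq_zero.mp (eq_zero_of_apply_eq_neg_adjoint_apply hdense hdecay h₂ h₁)⟩

/-- Uniqueness of fundamental operators: if `T 0, …, T (d-1)` are commuting contractions
with product `P = T 0 ⋯ T (d-1)`, defect operator `D = D_P` (regarded, via `Dmap`, as a
map into `𝒟_P = closure(Ran D_P)`), `j` an index, `T_{(j)}` the product omitting `T j`,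
and if the pairs `(F1, F2)` and `(F1', F2')` of bounded operators on `𝒟_P` both satisfy
`D_P T_j = F_{j1} D_P + F_{j2}* D_P P` and `D_P T_{(j)} = F_{j2} D_P + F_{j1}* D_P P`,
then `F1 = F1'` and `F2 = F2'`. -/
theorem stmt16 {H : Type*} [NormedAddCommGroup H] [InnerProductSpace ℂ H] [CompleteSpace H]
    (d : ℕ) (hd : 1 ≤ d) (T : Fin d → H →L[ℂ] H)
    (hT : ∀ i, ‖T i‖ ≤ 1) (hcomm : ∀ i j, Commute (T i) (T j)) (j : Fin d)
    (D : H →L[ℂ] H) (hDpos : D.IsPositive)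
    (hD2 : D * D = 1 - adjoint ((List.ofFn T).prod) * (List.ofFn T).prod)
    (Dmap : H →L[ℂ] ranClosure D) (hDmap : ∀ h : H, (Dmap h : H) = D h)
    (F1 F2 F1' F2' : ranClosure D →L[ℂ] ranClosure D)
    (hF : ∀ h : H,
      Dmap ((T j) h) = F1 (Dmap h) + adjoint F2 (Dmap (((List.ofFn T).prod) h)) ∧
      Dmap ((((List.ofFn T).eraseIdx (j : ℕ)).prod) h) =
        F2 (Dmap h) + adjoint F1 (Dmap (((List.ofFn T).prod) h)))
    (hF' : ∀ h : H,
      Dmap ((T j) h) = F1' (Dmap h) + adjoint F2' (Dmap (((List.ofFn T).prod) h)) ∧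
      Dmap ((((List.ofFn T).eraseIdx (j : ℕ)).prod) h) =
        F2' (Dmap h) + adjoint F1' (Dmap (((List.ofFn T).prod) h))) :
    F1 = F1' ∧ F2 = F2' :=
  stmt16_general d T j D hDpos hD2 Dmap hDmap F1 F2 F1' F2' hF hF'
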